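/- arXiv:2412.11786 — 4 statements merged into one kernel-verified Lean document; each statement's English description precedes it below -/
import Mathlib

section
/- Let K be a finite extension of Q_p with ring of integers O_K, let δ ∈ p^Q with δ > 1, and let T_n(δ) = K⟨δ^{-1}X_1,...,δ^{-1}X_n⟩ and T_n = K⟨X_1,...,X_n⟩ be the Tate algebras of the polydisks of radii δ and 1 respectively, with their Gauss norms. Then the inclusion map j_δ : T_n(δ) → T_n is a compact linear map: there is an open lattice L in T_n(δ) such that for every open lattice L' ⊆ T_n, the image j_δ(L) is contained in L' plus a finitely generated O_K-submodule of T_n. -/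
open scoped NNReal ENNReal
open Filter

noncomputable section

/-- The Gauss norm `|f|_δ = sup_I |a_I| δ^{|I|}` of a formal power series in `n`
variables given by its coefficient function `a`. -/
def gaussNorm {K : Type*} [NontriviallyNormedField K] (n : ℕ) (δ : ℝ≥0)
    (a : (Fin n →₀ ℕ) → K) : ℝ≥0∞ :=
  ⨆ I : Fin n →₀ ℕ, (‖a I‖₊ : ℝ≥0∞) * (δ : ℝ≥0∞) ^ (I.sum fun _ k => k)

/-- The Tate algebra `T_n(δ) = K⟨δ⁻¹X_1, …, δ⁻¹X_n⟩` of the polydisk of radius `δ`,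
as the set of coefficient functions with `|a_I| δ^{|I|} → 0`. -/
def tateSet (K : Type*) [NontriviallyNormedField K] (n : ℕ) (δ : ℝ≥0) :
    Set ((Fin n →₀ ℕ) → K) :=
  {a | Tendsto (fun I : Fin n →₀ ℕ => ‖a I‖₊ * δ ^ (I.sum fun _ k => k)) cofinite (nhds 0)}

/-- `L` is an open lattice of `T_n(δ)`: an `𝒪_K`-submodule of `T_n(δ)` containing a
ball `{|f|_δ ≤ ε}` for some `ε > 0` (openness for the Gauss norm topology). -/
def IsOpenLattice {K : Type*} [NontriviallyNormedField K] (n : ℕ) (δ : ℝ≥0)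
    (L : Set ((Fin n →₀ ℕ) → K)) : Prop :=
  L ⊆ tateSet K n δ ∧ (0 : (Fin n →₀ ℕ) → K) ∈ L ∧
    (∀ x ∈ L, ∀ y ∈ L, x + y ∈ L) ∧
    (∀ (c : K), ‖c‖ ≤ 1 → ∀ x ∈ L, c • x ∈ L) ∧
    ∃ ε : ℝ≥0∞, 0 < ε ∧ ∀ a ∈ tateSet K n δ, gaussNorm n δ a ≤ ε → a ∈ L

lemma squeeze_nnreal {α : Type*} {f g : α → ℝ≥0} (h : ∀ x, f x ≤ g x)
    (hg : Tendsto g cofinite (nhds 0)) : Tendsto f cofinite (nhds 0) :=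
  tendsto_of_tendsto_of_tendsto_of_le_of_le tendsto_const_nhds hg
    (fun _ => zero_le) h

lemma coeff_le_gauss {K : Type*} [NontriviallyNormedField K] {n : ℕ} {δ : ℝ≥0}
    (a : (Fin n →₀ ℕ) → K) (I : Fin n →₀ ℕ) :
    (‖a I‖₊ : ℝ≥0∞) * (δ : ℝ≥0∞) ^ (I.sum fun _ k => k) ≤ gaussNorm n δ a :=
  le_iSup (fun I : Fin n →₀ ℕ => (‖a I‖₊ : ℝ≥0∞) * (δ : ℝ≥0∞) ^ (I.sum fun _ k => k)) I

lemma comp_le_sum {n : ℕ} (I : Fin n →₀ ℕ) (i : Fin n) : I i ≤ I.sum fun _ k => k := by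
  rw [Finsupp.sum_fintype _ _ (fun _ => rfl)]
  exact Finset.single_le_sum (fun j _ => Nat.zero_le _) (Finset.mem_univ i)

lemma finite_small {n N : ℕ} : {I : Fin n →₀ ℕ | (I.sum fun _ k => k) < N}.Finite := by
  have hT : {f : Fin n → ℕ | ∀ i, f i < N}.Finite := by
    have : {f : Fin n → ℕ | ∀ i, f i < N} = Set.univ.pi fun _ : Fin n => Set.Iio N := by
      ext f; simp [Set.mem_pi]
    rw [this]
    exact Set.Finite.pi fun _ => Set.finite_Iio N
  have hpre : ((fun I : Fin n →₀ ℕ => (I : Fin n → ℕ)) ⁻¹' {f | ∀ i, f i < N}).Finite :=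
    hT.preimage (Set.injOn_of_injective (DFunLike.coe_injective))
  exact hpre.subset fun I hI i => lt_of_le_of_lt (comp_le_sum I i) hI

/-- for `δ = p^q > 1` the inclusion `j_δ : T_n(δ) → T_n` is a compact
linear map: there is an open lattice `L ⊆ T_n(δ)` such that for every open lattice
`L' ⊆ T_n`, `j_δ(L)` is contained in `L'` plus a finitely generated
`𝒪_K`-submodule of `T_n`. -/
theorem tate_inclusion_compact (p : ℕ) [Fact p.Prime]
    {K : Type*} [NontriviallyNormedField K] [CompleteSpace K]
    (hna : ∀ x y : K, ‖x + y‖ ≤ max ‖x‖ ‖y‖)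
    (n : ℕ) (δ : ℝ≥0) (hδ : 1 < δ) (hδp : ∃ q : ℚ, (δ : ℝ) = (p : ℝ) ^ (q : ℝ)) :
    ∃ L : Set ((Fin n →₀ ℕ) → K), IsOpenLattice n δ L ∧
      ∀ L' : Set ((Fin n →₀ ℕ) → K), IsOpenLattice n 1 L' →
        ∃ (m : ℕ) (w : Fin m → ((Fin n →₀ ℕ) → K)),
          (∀ i, w i ∈ tateSet K n 1) ∧
          ∀ a ∈ L, ∃ l ∈ L', ∃ c : Fin m → K,
            (∀ i, ‖c i‖ ≤ 1) ∧ a = l + ∑ i, c i • w i := by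
  classical
  set L : Set ((Fin n →₀ ℕ) → K) :=
    {a | a ∈ tateSet K n δ ∧ gaussNorm n δ a ≤ 1} with hL
  have hnn : ∀ (x y : K), ‖x + y‖₊ ≤ max ‖x‖₊ ‖y‖₊ := fun x y => hna x y
  have hδge : ∀ k : ℕ, (1 : ℝ≥0∞) ≤ (δ : ℝ≥0∞) ^ k := fun k =>
    one_le_pow_of_one_le' (by exact_mod_cast hδ.le) k
  -- coefficients of elements of L are bounded by (δ⁻¹)^{|I|}
  have hcoeff : ∀ a ∈ L, ∀ I : Fin n →₀ ℕ,
      (‖a I‖₊ : ℝ≥0∞) ≤ ((δ : ℝ≥0∞)⁻¹) ^ (I.sum fun _ k => k) := by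
    intro a ha I
    have h1 : (‖a I‖₊ : ℝ≥0∞) * (δ : ℝ≥0∞) ^ (I.sum fun _ k => k) ≤ 1 :=
      (coeff_le_gauss a I).trans ha.2
    rw [← ENNReal.inv_pow, ENNReal.le_inv_iff_mul_le]
    exact h1
  refine ⟨L, ?_, ?_⟩
  · refine ⟨fun a ha => ha.1, ?_, ?_, ?_, 1, one_pos, fun a ha hg => ⟨ha, hg⟩⟩
    · constructor
      · show Tendsto _ cofinite (nhds 0)
        simpa using (tendsto_const_nhds : Tendsto (fun _ : Fin n →₀ ℕ => (0 : ℝ≥0)) cofinite (nhds 0))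
      · show gaussNorm n δ 0 ≤ 1
        refine iSup_le fun I => ?_
        simp
    · rintro x ⟨hx1, hx2⟩ y ⟨hy1, hy2⟩
      constructor
      · refine squeeze_nnreal (f := fun I => ‖(x + y) I‖₊ * δ ^ (I.sum fun _ k => k))
          (g := fun I => ‖x I‖₊ * δ ^ (I.sum fun _ k => k) + ‖y I‖₊ * δ ^ (I.sum fun _ k => k))
          (fun I => ?_) (by simpa using hx1.add hy1)
        calc ‖(x + y) I‖₊ * δ ^ (I.sum fun _ k => k)
            ≤ (‖x I‖₊ + ‖y I‖₊) * δ ^ (I.sum fun _ k => k) := by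
              gcongr
              exact (hnn (x I) (y I)).trans (max_le_add_of_nonneg (zero_le) (zero_le))
          _ = _ := by ring
      · refine iSup_le fun I => ?_
        have := hnn (x I) (y I)
        have hle : (‖(x + y) I‖₊ : ℝ≥0∞) ≤ max (‖x I‖₊ : ℝ≥0∞) (‖y I‖₊ : ℝ≥0∞) := by
          rw [← ENNReal.coe_max]
          exact_mod_cast this
        calc (‖(x + y) I‖₊ : ℝ≥0∞) * (δ : ℝ≥0∞) ^ (I.sum fun _ k => k)
            ≤ max (‖x I‖₊ : ℝ≥0∞) (‖y I‖₊ : ℝ≥0∞) * (δ : ℝ≥0∞) ^ (I.sum fun _ k => k) := by gcongr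
          _ = max ((‖x I‖₊ : ℝ≥0∞) * (δ : ℝ≥0∞) ^ (I.sum fun _ k => k))
                ((‖y I‖₊ : ℝ≥0∞) * (δ : ℝ≥0∞) ^ (I.sum fun _ k => k)) := by
              rw [max_mul_of_nonneg _ _ (zero_le)]
          _ ≤ 1 := max_le ((coeff_le_gauss x I).trans hx2) ((coeff_le_gauss y I).trans hy2)
    · rintro c hc x ⟨hx1, hx2⟩
      have hcK : (‖c‖₊ : ℝ≥0) ≤ 1 := hc
      constructor
      · refine squeeze_nnreal (f := fun I => ‖(c • x) I‖₊ * δ ^ (I.sum fun _ k => k))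
          (g := fun I => ‖x I‖₊ * δ ^ (I.sum fun _ k => k)) (fun I => ?_) hx1
        show ‖(c • x) I‖₊ * δ ^ (I.sum fun _ k => k) ≤ ‖x I‖₊ * δ ^ (I.sum fun _ k => k)
        have hcx : ‖(c • x) I‖₊ = ‖c‖₊ * ‖x I‖₊ := by
          simp [Pi.smul_apply, nnnorm_smul]
        rw [hcx]
        gcongr
        exact mul_le_of_le_one_left (zero_le) hcK
      · refine iSup_le fun I => ?_
        have : ‖(c • x) I‖₊ = ‖c‖₊ * ‖x I‖₊ := by simp [Pi.smul_apply, nnnorm_smul]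
        calc (‖(c • x) I‖₊ : ℝ≥0∞) * (δ : ℝ≥0∞) ^ (I.sum fun _ k => k)
            ≤ (‖x I‖₊ : ℝ≥0∞) * (δ : ℝ≥0∞) ^ (I.sum fun _ k => k) := by
              gcongr
              exact_mod_cast this ▸ mul_le_of_le_one_left (zero_le) hcK
          _ ≤ 1 := (coeff_le_gauss x I).trans hx2
  · rintro L' ⟨hsub', _, _, _, ε, hε, hball⟩
    -- choose N with (δ⁻¹)^N ≤ ε
    obtain ⟨N, hN⟩ : ∃ N : ℕ, ((δ : ℝ≥0∞)⁻¹) ^ N ≤ ε := by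
      have hlt : (δ : ℝ≥0∞)⁻¹ < 1 := by
        rw [ENNReal.inv_lt_one]
        exact_mod_cast hδ
      have := (ENNReal.tendsto_pow_atTop_nhds_zero_of_lt_one hlt).eventually_le_const hε
      obtain ⟨N, hN⟩ := this.exists
      exact ⟨N, hN⟩
    set S : Finset (Fin n →₀ ℕ) := (finite_small (n := n) (N := N)).toFinset with hS
    have hmemS : ∀ I, I ∈ S ↔ (I.sum fun _ k => k) < N := by
      intro I; simp [hS, Set.Finite.mem_toFinset]
    set e : Fin S.card ≃ {x // x ∈ S} := S.equivFin.symm with he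
    refine ⟨S.card, fun i J => if J = (e i : Fin n →₀ ℕ) then (1 : K) else 0, ?_, ?_⟩
    · intro i
      show Tendsto _ cofinite (nhds 0)
      refine tendsto_const_nhds.congr' ?_
      rw [EventuallyEq, eventually_cofinite]
      refine (Set.finite_singleton ((e i : Fin n →₀ ℕ))).subset ?_
      intro J hJ
      simp only [Set.mem_setOf_eq] at hJ
      by_contra hne
      simp only [Set.mem_singleton_iff] at hne
      apply hJ
      simp [hne]
    · intro a ha
      set l : (Fin n →₀ ℕ) → K := fun J => if J ∈ S then 0 else a J with hl
      have hlt : l ∈ tateSet K n 1 := by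
        refine squeeze_nnreal (g := fun I => ‖a I‖₊ * δ ^ (I.sum fun _ k => k)) (fun I => ?_) ha.1
        have h1 : ‖l I‖₊ ≤ ‖a I‖₊ := by
          by_cases hI : I ∈ S <;> simp [hl, hI]
        calc ‖l I‖₊ * 1 ^ (I.sum fun _ k => k) = ‖l I‖₊ := by simp
          _ ≤ ‖a I‖₊ := h1
          _ ≤ ‖a I‖₊ * δ ^ (I.sum fun _ k => k) :=
              le_mul_of_one_le_right (zero_le) (one_le_pow_of_one_le' hδ.le _)
      have hlg : gaussNorm n 1 l ≤ ε := by
        refine iSup_le fun I => ?_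
        by_cases hI : I ∈ S
        · simp [hl, hI]
        · have hge : N ≤ I.sum fun _ k => k := by
            by_contra h
            exact hI ((hmemS I).2 (lt_of_not_ge h))
          have : (‖l I‖₊ : ℝ≥0∞) ≤ ((δ : ℝ≥0∞)⁻¹) ^ (I.sum fun _ k => k) := by
            have : l I = a I := by simp [hl, hI]
            rw [this]
            exact hcoeff a ha I
          calc (‖l I‖₊ : ℝ≥0∞) * ((1 : ℝ≥0) : ℝ≥0∞) ^ (I.sum fun _ k => k)
              = (‖l I‖₊ : ℝ≥0∞) := by simp
            _ ≤ ((δ : ℝ≥0∞)⁻¹) ^ (I.sum fun _ k => k) := this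
            _ ≤ ((δ : ℝ≥0∞)⁻¹) ^ N := by
                refine pow_le_pow_of_le_one (zero_le) ?_ hge
                rw [ENNReal.inv_le_one]
                exact_mod_cast hδ.le
            _ ≤ ε := hN
      refine ⟨l, hball l hlt hlg, fun i => a (e i : Fin n →₀ ℕ), fun i => ?_, ?_⟩
      · have h1 := hcoeff a ha (e i : Fin n →₀ ℕ)
        have h2 : ((δ : ℝ≥0∞)⁻¹) ^ (((e i : Fin n →₀ ℕ)).sum fun _ k => k) ≤ 1 :=
          pow_le_one' (by rw [ENNReal.inv_le_one]; exact_mod_cast hδ.le) _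
        have : (‖a (e i : Fin n →₀ ℕ)‖₊ : ℝ≥0∞) ≤ 1 := h1.trans h2
        have hnn1 : ‖a (e i : Fin n →₀ ℕ)‖₊ ≤ 1 := by exact_mod_cast this
        exact hnn1
      · funext J
        have hsum : (∑ i, (a (e i : Fin n →₀ ℕ)) •
            (fun J' => if J' = (e i : Fin n →₀ ℕ) then (1 : K) else 0)) J
            = if J ∈ S then a J else 0 := by
          rw [Finset.sum_apply]
          have : ∀ i, ((a (e i : Fin n →₀ ℕ)) •
              (fun J' => if J' = (e i : Fin n →₀ ℕ) then (1 : K) else 0)) J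
              = if J = (e i : Fin n →₀ ℕ) then a (e i : Fin n →₀ ℕ) else 0 := by
            intro i
            by_cases h : J = (e i : Fin n →₀ ℕ) <;> simp [h]
          rw [Finset.sum_congr rfl fun i _ => this i]
          calc (∑ i : Fin S.card, if J = (e i : Fin n →₀ ℕ) then a (e i : Fin n →₀ ℕ) else 0)
              = ∑ x : {x // x ∈ S}, (if J = (x : Fin n →₀ ℕ) then a (x : Fin n →₀ ℕ) else 0) :=
                Equiv.sum_comp e (fun x : {x // x ∈ S} =>
                  if J = (x : Fin n →₀ ℕ) then a (x : Fin n →₀ ℕ) else 0)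
            _ = ∑ x ∈ S, (if J = x then a x else 0) :=
                Finset.sum_coe_sort S (fun x => if J = x then a x else 0)
            _ = if J ∈ S then a J else 0 := Finset.sum_ite_eq S J a
        show a J = l J + _
        rw [hsum]
        by_cases hJ : J ∈ S <;> simp [hl, hJ]


end
end

section
/- Let f : A → B be a continuous linear map of p-adic Banach spaces such that coker(f) is finite dimensional over Q_p. Then f is strict, i.e. the induced map A/ker(f) → im(f) is a topological isomorphism where im(f) carries the subspace topology from B. (Equivalently, ker of the projection B → coker(f) is closed and A surjects openly onto it.) -/
/-- a continuous linear map `f : A → B` of `p`-adic Banach spaces with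
finite dimensional cokernel is strict: its image is closed, and `f` is open onto its
image (so the induced map `A/ker f → im f` is a topological isomorphism). -/
theorem strict_of_finite_dimensional_coker (p : ℕ) [Fact p.Prime]
    {A B : Type*} [NormedAddCommGroup A] [NormedSpace ℚ_[p] A] [CompleteSpace A]
    [NormedAddCommGroup B] [NormedSpace ℚ_[p] B] [CompleteSpace B]
    (f : A →L[ℚ_[p]] B)
    (hfin : FiniteDimensional ℚ_[p] (B ⧸ LinearMap.range (f : A →ₗ[ℚ_[p]] B))) :
    IsClosed (LinearMap.range (f : A →ₗ[ℚ_[p]] B) : Set B) ∧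
    ∀ U : Set A, IsOpen U → ∃ V : Set B, IsOpen V ∧ f '' U = V ∩ Set.range f := by
  set R : Submodule ℚ_[p] B := LinearMap.range (f : A →ₗ[ℚ_[p]] B) with hR
  obtain ⟨q, hq⟩ := Submodule.exists_isCompl R
  have hfd : FiniteDimensional ℚ_[p] q :=
    (Submodule.quotientEquivOfIsCompl R q hq).finiteDimensional
  have : CompleteSpace q := FiniteDimensional.complete ℚ_[p] q
  -- the map g : A × q → B
  let g : (A × q) →L[ℚ_[p]] B :=
    f.comp (ContinuousLinearMap.fst ℚ_[p] A q) +
      q.subtypeL.comp (ContinuousLinearMap.snd ℚ_[p] A q)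
  have hg : ∀ x : A × q, g x = f x.1 + (x.2 : B) := fun x => rfl
  have hsurj : Function.Surjective g := by
    intro b
    have hb : b ∈ R ⊔ q := by rw [hq.sup_eq_top]; trivial
    obtain ⟨y, hy, z, hz, hyz⟩ := Submodule.mem_sup.mp hb
    obtain ⟨a, ha⟩ := hy
    refine ⟨(a, ⟨z, hz⟩), ?_⟩
    rw [hg]
    show (f : A →ₗ[ℚ_[p]] B) a + z = b
    rw [ha, hyz]
  have hopen : IsOpenMap g := ContinuousLinearMap.isOpenMap g hsurj
  have hclosed : IsClosed (R : Set B) := by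
    have key : (R : Set B) = (g '' ((Set.univ ×ˢ {0} : Set (A × q))ᶜ))ᶜ := by
      ext b
      simp only [Set.mem_compl_iff, Set.mem_image, not_exists, not_and]
      constructor
      · rintro ⟨a, rfl⟩ x hx hgx
        apply hx
        have hmem : (x.2 : B) ∈ R := by
          refine ⟨a - x.1, ?_⟩
          have := hgx
          rw [hg] at this
          show f (a - x.1) = (x.2 : B)
          rw [map_sub]
          exact (eq_sub_of_add_eq' this).symm
        have : (x.2 : B) = 0 := by
          have := hq.disjoint.le_bot ⟨hmem, x.2.2⟩
          simpa using this
        constructor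
        · trivial
        · exact Subtype.ext this
      · intro hb
        obtain ⟨x, hx⟩ := hsurj b
        by_cases h0 : x.2 = 0
        · refine ⟨x.1, ?_⟩
          rw [← hx, hg, h0]
          simp
        · exact absurd (hb x (fun hmem => h0 hmem.2) hx) not_false
    rw [key]
    apply isOpen_compl_iff.mp
    rw [compl_compl]
    apply hopen
    exact (isOpen_compl_iff.mpr ((isClosed_univ.prod isClosed_singleton)))
  refine ⟨hclosed, ?_⟩
  -- openness onto image
  have : CompleteSpace R := hclosed.completeSpace_coe
  let g' : A →L[ℚ_[p]] R := f.codRestrict R (fun a => ⟨a, rfl⟩)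
  have hsurj' : Function.Surjective g' := by
    rintro ⟨b, a, rfl⟩
    exact ⟨a, rfl⟩
  have hopen' : IsOpenMap g' := ContinuousLinearMap.isOpenMap g' hsurj'
  intro U hU
  have : IsOpen (g' '' U) := hopen' U hU
  obtain ⟨V, hV, hVeq⟩ := isOpen_induced_iff.mp this
  refine ⟨V, hV, ?_⟩
  have himg : f '' U = Subtype.val '' (g' '' U) := by
    rw [← Set.image_comp]; rfl
  rw [himg, ← hVeq, Set.image_preimage_eq_inter_range, Subtype.range_coe]
  rfl
end

section
/- Every nuclear Banach space over a finite extension K of Q_p (more generally, over a nonarchimedean complete nontrivially valued field that is spherically complete or locally compact) is finite dimensional. -/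
namespace Paper

variable (K : Type*) [NontriviallyNormedField K]

/-- An `𝒪_K`-lattice-like subset: contains `0`, closed under addition and under
scalars of norm at most 1. -/
def IsLatticeSet {V : Type*} [AddCommGroup V] [Module K V] (L : Set V) : Prop :=
  (0 : V) ∈ L ∧ (∀ x ∈ L, ∀ y ∈ L, x + y ∈ L) ∧
    ∀ (c : K) (x : V), ‖c‖ ≤ 1 → x ∈ L → c • x ∈ L

/-- A subset `B` is compactoid if for every open lattice `L` there are finitely many
vectors `w₁, …, w_m` with `B ⊆ L + 𝒪_K w₁ + ⋯ + 𝒪_K w_m`. -/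
def IsCompactoid {V : Type*} [AddCommGroup V] [Module K V] [TopologicalSpace V]
    (B : Set V) : Prop :=
  ∀ L : Set V, IsLatticeSet K L → L ∈ nhds (0 : V) →
    ∃ s : Finset V, B ⊆
      {v | ∃ l ∈ L, ∃ c : V → K, (∀ x, ‖c x‖ ≤ 1) ∧ v = l + ∑ x ∈ s, c x • x}

/-- A map is compact if some open lattice has compactoid and complete image. -/
def IsCompactMapNA {V W : Type*} [AddCommGroup V] [Module K V] [TopologicalSpace V]
    [AddCommGroup W] [Module K W] [UniformSpace W] (f : V → W) : Prop :=
  ∃ A : Set V, IsLatticeSet K A ∧ A ∈ nhds (0 : V) ∧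
    IsCompactoid K (f '' A) ∧ IsComplete (f '' A)

/-- The topology is locally convex (nonarchimedean sense): every neighbourhood of `0`
contains an open lattice. -/
def IsLCTopology (V : Type*) [AddCommGroup V] [Module K V] [TopologicalSpace V] : Prop :=
  ∀ s ∈ nhds (0 : V), ∃ L : Set V, IsLatticeSet K L ∧ L ∈ nhds (0 : V) ∧ L ⊆ s

/-- `V` is nuclear: every open lattice `L` contains an open lattice `M` which is
compactoid in the gauge seminormed space `V_L` (i.e. for every scalar dilate of `L`,
`M` is covered by it up to a finitely generated `𝒪_K`-module). -/
def IsNuclearSpace (V : Type*) [AddCommGroup V] [Module K V] [TopologicalSpace V] : Prop :=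
  ∀ L : Set V, IsLatticeSet K L → L ∈ nhds (0 : V) →
    ∃ M : Set V, IsLatticeSet K M ∧ M ∈ nhds (0 : V) ∧ M ⊆ L ∧
      ∀ c : K, c ≠ 0 → ∃ s : Finset V, M ⊆
        {v | ∃ l ∈ L, ∃ co : V → K, (∀ x, ‖co x‖ ≤ 1) ∧ v = c • l + ∑ x ∈ s, co x • x}

end Paper

/-- every nuclear Banach space over a locally compact nonarchimedean
field (e.g. a finite extension of `ℚ_p`) is finite dimensional. -/
theorem Paper.finiteDimensional_of_nuclear_banach
    {K : Type*} [NontriviallyNormedField K] [LocallyCompactSpace K]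
    (hKna : ∀ x y : K, ‖x + y‖ ≤ max ‖x‖ ‖y‖)
    {V : Type*} [NormedAddCommGroup V] [NormedSpace K V] [CompleteSpace V]
    (hVna : ∀ x y : V, ‖x + y‖ ≤ max ‖x‖ ‖y‖)
    (hnuc : IsNuclearSpace K V) :
    FiniteDimensional K V := by
  haveI : ProperSpace K :=
    ProperSpace.of_nontriviallyNormedField_of_weaklyLocallyCompactSpace K
  -- the closed unit ball is an open lattice
  have hL : IsLatticeSet K (Metric.closedBall (0 : V) 1) := by
    refine ⟨by simp, ?_, ?_⟩
    · intro x hx y hy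
      simp only [Metric.mem_closedBall, dist_zero_right] at *
      exact le_trans (hVna x y) (max_le hx hy)
    · intro c x hc hx
      simp only [Metric.mem_closedBall, dist_zero_right] at *
      calc ‖c • x‖ = ‖c‖ * ‖x‖ := norm_smul c x
        _ ≤ 1 * 1 := mul_le_mul hc hx (norm_nonneg x) zero_le_one
        _ = 1 := one_mul 1
  obtain ⟨M, -, hMnhds, hML, hMc⟩ :=
    hnuc (Metric.closedBall (0 : V) 1) hL (Metric.closedBall_mem_nhds 0 one_pos)
  obtain ⟨ε, εpos, hεM⟩ := Metric.mem_nhds_iff.mp hMnhds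
  obtain ⟨a, ha⟩ := NormedField.exists_one_lt_norm K
  have hapos : (0 : ℝ) < ‖a‖ := lt_trans one_pos ha
  obtain ⟨c, hc0, hcnorm⟩ := NormedField.exists_norm_lt K (div_pos εpos hapos)
  have hcne : c ≠ 0 := by
    intro h; rw [h, norm_zero] at hc0; exact lt_irrefl 0 hc0
  obtain ⟨s, hs⟩ := hMc c hcne
  set W : Submodule K V := Submodule.span K (s : Set V) with hW
  haveI : FiniteDimensional K W := FiniteDimensional.span_of_finite K s.finite_toSet
  set θ : ℝ := ‖c‖ * (ε⁻¹ * ‖a‖) with hθ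
  have hθpos : 0 < θ := by positivity
  have hθlt : θ < 1 := by
    rw [hθ]
    have : ‖c‖ * (ε⁻¹ * ‖a‖) < (ε / ‖a‖) * (ε⁻¹ * ‖a‖) := by
      apply mul_lt_mul_of_pos_right hcnorm
      positivity
    refine lt_of_lt_of_le this (le_of_eq ?_)
    field_simp
  -- key approximation step
  have key : ∀ v : V, ∃ w ∈ W, ‖v - w‖ ≤ θ * ‖v‖ := by
    intro v
    by_cases hv : v = 0
    · exact ⟨0, W.zero_mem, by simp [hv]⟩
    · obtain ⟨d, hd0, hdlt, -, hdinv⟩ := rescale_to_shell ha εpos hv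
      have hdvM : d • v ∈ M := hεM (by simpa [Metric.mem_ball, dist_zero_right] using hdlt)
      obtain ⟨l, hl, co, hco, heq⟩ := hs hdvM
      refine ⟨d⁻¹ • ∑ x ∈ s, co x • x, ?_, ?_⟩
      · exact W.smul_mem _ (Submodule.sum_mem W fun x hx =>
          W.smul_mem _ (Submodule.subset_span hx))
      · have hv' : v - d⁻¹ • ∑ x ∈ s, co x • x = d⁻¹ • (c • l) := by
          have : v = d⁻¹ • (d • v) := by rw [smul_smul, inv_mul_cancel₀ hd0, one_smul]
          rw [this, heq, smul_add]
          abel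
        rw [hv', norm_smul, norm_smul, norm_inv]
        have hlnorm : ‖l‖ ≤ 1 := by
          simpa [Metric.mem_closedBall, dist_zero_right] using hl
        calc ‖d‖⁻¹ * (‖c‖ * ‖l‖) ≤ (ε⁻¹ * ‖a‖ * ‖v‖) * (‖c‖ * 1) := by
              apply mul_le_mul hdinv _ (by positivity) (by positivity)
              exact mul_le_mul_of_nonneg_left hlnorm (norm_nonneg c)
          _ = θ * ‖v‖ := by rw [hθ]; ring
  -- iterate to get arbitrarily good approximations
  have iter : ∀ (n : ℕ) (v : V), ∃ w ∈ W, ‖v - w‖ ≤ θ ^ n * ‖v‖ := by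
    intro n
    induction n with
    | zero => intro v; exact ⟨0, W.zero_mem, by simp⟩
    | succ n ih =>
      intro v
      obtain ⟨w, hwW, hw⟩ := ih v
      obtain ⟨w', hw'W, hw'⟩ := key (v - w)
      refine ⟨w + w', W.add_mem hwW hw'W, ?_⟩
      have : v - (w + w') = (v - w) - w' := by abel
      rw [this, pow_succ, mul_comm (θ ^ n) θ, mul_assoc]
      exact le_trans hw' (mul_le_mul_of_nonneg_left hw hθpos.le)
  -- every vector lies in the closure of W, hence in W
  have hclosed : IsClosed (W : Set V) := W.closed_of_finiteDimensional
  have hmem : ∀ v : V, v ∈ W := by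
    intro v
    have hvclos : v ∈ closure (W : Set V) := by
      rw [Metric.mem_closure_iff]
      intro δ hδ
      have htend : Filter.Tendsto (fun n : ℕ => θ ^ n * ‖v‖) Filter.atTop (nhds 0) := by
        have := tendsto_pow_atTop_nhds_zero_of_lt_one hθpos.le hθlt
        simpa using this.mul_const ‖v‖
      obtain ⟨n, hn⟩ := (htend.eventually (eventually_lt_nhds hδ)).exists
      obtain ⟨w, hwW, hw⟩ := iter n v
      exact ⟨w, hwW, by rw [dist_eq_norm]; exact lt_of_le_of_lt hw hn⟩
    exact hclosed.closure_subset hvclos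
  have htop : W = ⊤ := Submodule.eq_top_iff'.mpr hmem
  haveI : FiniteDimensional K (⊤ : Submodule K V) := htop ▸ ‹FiniteDimensional K W›
  exact Module.Finite.equiv (Submodule.topEquiv (R := K) (M := V))
end

section
/- Let G be a profinite group and V a Banach Q_p-vector space with continuous G-action such that H^i_cont(G,V) is finite dimensional over Q_p. Then the differentials of the continuous cochain complex C(G^{•},V) are strict in degrees around i; consequently the condensed cohomology H^i(G, V) is the condensed vector space associated to the finite dimensional space H^i_cont(G,V) with its natural (Hausdorff) topology. -/
open LinearMap Set

/-- A continuous linear map of Banach spaces with finite dimensional cokernel has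
closed range. -/
theorem closed_range_of_finiteDimensional_coker
    {𝕜 A K : Type*} [NontriviallyNormedField 𝕜] [CompleteSpace 𝕜]
    [NormedAddCommGroup A] [NormedSpace 𝕜 A] [CompleteSpace A]
    [NormedAddCommGroup K] [NormedSpace 𝕜 K] [CompleteSpace K]
    (f : A →L[𝕜] K)
    (hfin : FiniteDimensional 𝕜 (K ⧸ LinearMap.range (f : A →ₗ[𝕜] K))) :
    IsClosed ((LinearMap.range (f : A →ₗ[𝕜] K)) : Set K) := by
  classical
  set R : Submodule 𝕜 K := LinearMap.range (f : A →ₗ[𝕜] K) with hR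
  set N : Submodule 𝕜 A := LinearMap.ker (f : A →ₗ[𝕜] K) with hNdef
  haveI hN : IsClosed (N : Set A) := ContinuousLinearMap.isClosed_ker f
  -- the induced injective map on the quotient
  let fbar : (A ⧸ N) →ₗ[𝕜] K := N.liftQ (f : A →ₗ[𝕜] K) le_rfl
  have hbound : ∀ x : A ⧸ N, ‖fbar x‖ ≤ (‖f‖ + 1) * ‖x‖ := by
    intro x
    refine le_of_forall_pos_le_add fun ε hε => ?_
    have hδ : 0 < ε / (‖f‖ + 1) := by positivity
    obtain ⟨a, rfl, ha⟩ := Submodule.Quotient.norm_mk_lt x hδ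
    have h1 : fbar (Submodule.Quotient.mk a) = f a := by
      simp [fbar, Submodule.liftQ_apply]
    rw [h1]
    have h2 : ‖f a‖ ≤ ‖f‖ * ‖a‖ := f.le_opNorm a
    have h3 : ‖f‖ * ‖a‖ ≤ (‖f‖ + 1) * ‖a‖ := by nlinarith [norm_nonneg a, norm_nonneg f]
    have h4 : (‖f‖ + 1) * ‖a‖
        ≤ (‖f‖ + 1) * (‖(Submodule.Quotient.mk a : A ⧸ N)‖ + ε / (‖f‖ + 1)) := by
      have hpos : (0:ℝ) < ‖f‖ + 1 := by positivity
      exact mul_le_mul_of_nonneg_left ha.le hpos.le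
    have h5 : (‖f‖ + 1) * (‖(Submodule.Quotient.mk a : A ⧸ N)‖ + ε / (‖f‖ + 1))
        = (‖f‖ + 1) * ‖(Submodule.Quotient.mk a : A ⧸ N)‖ + ε := by
      field_simp
    linarith
  let fbarL : (A ⧸ N) →L[𝕜] K := LinearMap.mkContinuous fbar (‖f‖ + 1) hbound
  have hker : LinearMap.ker (fbarL : (A ⧸ N) →ₗ[𝕜] K) = ⊥ := by
    have : LinearMap.ker fbar = ⊥ := Submodule.ker_liftQ_eq_bot _ _ _ le_rfl
    exact this
  have hrange : LinearMap.range (fbarL : (A ⧸ N) →ₗ[𝕜] K) = R := by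
    have : LinearMap.range fbar = R := by
      rw [Submodule.range_liftQ]
    exact this
  -- choose a finite dimensional complement of R
  obtain ⟨q, hq⟩ := R.exists_isCompl
  haveI : FiniteDimensional 𝕜 q := (R.quotientEquivOfIsCompl q hq).finiteDimensional
  have hqclosed : IsClosed (q : Set K) := q.closed_of_finiteDimensional
  haveI : CompleteSpace q := hqclosed.completeSpace_coe
  -- the bijective continuous linear map (A/N) × q → K
  let g : ((A ⧸ N) × q) →L[𝕜] K := fbarL.coprod q.subtypeL
  have hgapp : ∀ z : (A ⧸ N) × q, g z = fbarL z.1 + (z.2 : K) := fun z => rfl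
  have hgker : LinearMap.ker (g : ((A ⧸ N) × q) →ₗ[𝕜] K) = ⊥ := by
    rw [LinearMap.ker_eq_bot']
    rintro ⟨x, v⟩ hxv
    have hxv' : fbarL x + (v : K) = 0 := hxv
    have hvx : fbarL x = -(v : K) := eq_neg_of_add_eq_zero_left hxv'
    have hmem : fbarL x ∈ R ⊓ q := by
      refine ⟨?_, ?_⟩
      · rw [← hrange]; exact LinearMap.mem_range_self _ x
      · rw [hvx]; exact q.neg_mem v.2
    rw [hq.inf_eq_bot] at hmem
    have hx0 : fbarL x = 0 := Submodule.mem_bot 𝕜 |>.mp hmem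
    have hv0 : (v : K) = 0 := by
      have := hxv'; rw [hx0, zero_add] at this; exact this
    have hx : x = 0 := by
      have hxm : x ∈ LinearMap.ker (fbarL : (A ⧸ N) →ₗ[𝕜] K) := LinearMap.mem_ker.mpr hx0
      rw [hker] at hxm
      simpa using hxm
    exact Prod.ext hx (Subtype.ext hv0)
  have hgrange : LinearMap.range (g : ((A ⧸ N) × q) →ₗ[𝕜] K) = ⊤ := by
    rw [LinearMap.range_eq_top]
    intro y
    have hy : y ∈ R ⊔ q := by rw [hq.sup_eq_top]; trivial
    obtain ⟨r, hr, s, hs, hrs⟩ := Submodule.mem_sup.mp hy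
    rw [← hrange] at hr
    obtain ⟨x, hx⟩ := hr
    exact ⟨(x, ⟨s, hs⟩), by show g (x, ⟨s, hs⟩) = y; rw [hgapp]; simp only []; rw [show fbarL x = r from hx]; exact hrs⟩
  let e : ((A ⧸ N) × q) ≃L[𝕜] K := ContinuousLinearEquiv.ofBijective g hgker hgrange
  have himg : (R : Set K) = e '' (Set.univ ×ˢ ({0} : Set q)) := by
    ext y
    constructor
    · intro hy
      rw [← hrange] at hy
      obtain ⟨x, hx⟩ := hy
      exact ⟨(x, 0), ⟨trivial, rfl⟩, by
        show g (x, 0) = y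
        rw [hgapp]; simpa using hx⟩
    · rintro ⟨⟨x, v⟩, ⟨-, hv⟩, rfl⟩
      have hv0 : v = 0 := hv
      show g (x, v) ∈ R
      rw [hgapp, hv0]
      simp only [ZeroMemClass.coe_zero, add_zero]
      rw [← hrange]
      exact LinearMap.mem_range_self _ x
  rw [himg]
  exact (e.toHomeomorph.isClosedMap) _ (isClosed_univ.prod isClosed_singleton)

set_option synthInstance.maxHeartbeats 1000000



/-- let `G` be a profinite group and `V` a Banach `ℚ_p`-space with
continuous `G`-action whose continuous cohomology `H^i_cont(G,V)` is finite
dimensional.  Formalized at the level of the continuous cochain complex: given the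
differentials `d₁ : C(G^{i-1},V) → C(G^i,V)` and `d₂ : C(G^i,V) → C(G^{i+1},V)`
(continuous linear maps of `ℚ_p`-Banach spaces with `d₂ ∘ d₁ = 0`) such that the
cohomology `ker d₂ / im d₁` is finite dimensional, the differential `d₁` is strict
(closed image, open onto its image), and consequently the cohomology, with its
natural quotient topology, is Hausdorff — i.e. the condensed cohomology `H^i(G,V)`
is the condensed vector space associated to the finite dimensional space
`H^i_cont(G,V)`. -/
theorem strict_differentials_of_finite_cohomology (p : ℕ) [Fact p.Prime]
    {A B C : Type*}
    [NormedAddCommGroup A] [NormedSpace ℚ_[p] A] [CompleteSpace A]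
    [NormedAddCommGroup B] [NormedSpace ℚ_[p] B] [CompleteSpace B]
    [NormedAddCommGroup C] [NormedSpace ℚ_[p] C] [CompleteSpace C]
    (d₁ : A →L[ℚ_[p]] B) (d₂ : B →L[ℚ_[p]] C)
    (hd : ∀ x, d₂ (d₁ x) = 0)
    (hfin : FiniteDimensional ℚ_[p]
      ((LinearMap.ker (d₂ : B →ₗ[ℚ_[p]] C)) ⧸
        (LinearMap.range (d₁ : A →ₗ[ℚ_[p]] B)).comap
          (LinearMap.ker (d₂ : B →ₗ[ℚ_[p]] C)).subtype)) :
    IsClosed (Set.range d₁) ∧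
    (∀ U : Set A, IsOpen U → ∃ W : Set B, IsOpen W ∧ d₁ '' U = W ∩ Set.range d₁) ∧
    T2Space ((LinearMap.ker (d₂ : B →ₗ[ℚ_[p]] C)) ⧸
      (LinearMap.range (d₁ : A →ₗ[ℚ_[p]] B)).comap
        (LinearMap.ker (d₂ : B →ₗ[ℚ_[p]] C)).subtype) := by
  classical
  set K : Submodule ℚ_[p] B := LinearMap.ker (d₂ : B →ₗ[ℚ_[p]] C) with hKdef
  have hKclosed : IsClosed (K : Set B) := by
    have h := ContinuousLinearMap.isClosed_ker d₂
    convert h using 2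
  haveI : CompleteSpace K := hKclosed.completeSpace_coe
  let f : A →L[ℚ_[p]] K := d₁.codRestrict K (fun x => LinearMap.mem_ker.mpr (hd x))
  have hrangef : LinearMap.range (f : A →ₗ[ℚ_[p]] K)
      = (LinearMap.range (d₁ : A →ₗ[ℚ_[p]] B)).comap K.subtype := by
    rw [show (f : A →ₗ[ℚ_[p]] K) = (d₁ : A →ₗ[ℚ_[p]] B).codRestrict K (fun x => LinearMap.mem_ker.mpr (hd x)) from rfl, LinearMap.range_codRestrict]
  haveI hfin' : FiniteDimensional ℚ_[p] (K ⧸ LinearMap.range (f : A →ₗ[ℚ_[p]] K)) := by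
    rw [hrangef]; exact hfin
  have hclosedf : IsClosed ((LinearMap.range (f : A →ₗ[ℚ_[p]] K)) : Set K) :=
    closed_range_of_finiteDimensional_coker f hfin'
  have hset : Set.range ⇑d₁
      = Subtype.val '' ((LinearMap.range (f : A →ₗ[ℚ_[p]] K)) : Set K) := by
    ext y
    constructor
    · rintro ⟨a, rfl⟩
      exact ⟨f a, LinearMap.mem_range_self _ a, rfl⟩
    · rintro ⟨z, ⟨a, rfl⟩, rfl⟩
      exact ⟨a, rfl⟩
  have h1 : IsClosed (Set.range ⇑d₁) := by
    rw [hset]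
    exact hKclosed.isClosedEmbedding_subtypeVal.isClosedMap _ hclosedf
  -- the range as a submodule of B, closed
  set Rs : Submodule ℚ_[p] B := LinearMap.range (d₁ : A →ₗ[ℚ_[p]] B) with hRsdef
  have hRscoe : (Rs : Set B) = Set.range ⇑d₁ := by
    ext y; simp [hRsdef, LinearMap.mem_range]
  have hRsclosed : IsClosed (Rs : Set B) := by rw [hRscoe]; exact h1
  refine ⟨h1, ?_, ?_⟩
  · -- openness onto the image
    haveI : CompleteSpace Rs := hRsclosed.completeSpace_coe
    let g : A →L[ℚ_[p]] Rs := d₁.codRestrict Rs (fun x => LinearMap.mem_range_self _ x)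
    have hgsurj : Function.Surjective g := by
      rintro ⟨y, hy⟩
      obtain ⟨a, ha⟩ := hy
      exact ⟨a, Subtype.ext ha⟩
    have hgopen : IsOpenMap g := ContinuousLinearMap.isOpenMap g hgsurj
    intro U hU
    have hop : IsOpen (g '' U) := hgopen U hU
    obtain ⟨W, hW, hWU⟩ := isOpen_induced_iff.mp hop
    refine ⟨W, hW, ?_⟩
    ext y
    constructor
    · rintro ⟨a, ha, rfl⟩
      refine ⟨?_, ⟨a, rfl⟩⟩
      have : g a ∈ Subtype.val ⁻¹' W := by rw [hWU]; exact ⟨a, ha, rfl⟩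
      exact this
    · rintro ⟨hyW, a, rfl⟩
      have hmem : d₁ a ∈ Rs := LinearMap.mem_range_self _ a
      have : (⟨d₁ a, hmem⟩ : Rs) ∈ g '' U := by
        rw [← hWU]; exact hyW
      obtain ⟨a', ha', hga'⟩ := this
      have : d₁ a' = d₁ a := congrArg Subtype.val hga'
      exact ⟨a', ha', this⟩
  · -- T2 of the quotient
    haveI hcl : IsClosed ((Rs.comap K.subtype : Submodule ℚ_[p] K) : Set K) := by
      have : ((Rs.comap K.subtype : Submodule ℚ_[p] K) : Set K)
          = Subtype.val ⁻¹' (Rs : Set B) := rfl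
      rw [this]
      exact hRsclosed.preimage continuous_subtype_val
    haveI hng : NormedAddCommGroup (↥K ⧸ Rs.comap K.subtype) :=
      Submodule.Quotient.normedAddCommGroup _
    exact inferInstance
end
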